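/- arXiv:1401.4333 — 9 statements merged into one kernel-verified Lean document; each statement's English description precedes it below -/
import Mathlib

section
/- In Z_8 × Z_8, the three points (0,0), (2,4), (4,4) satisfy the vanishing of the determinant of the matrix with rows (0,0,1), (2,4,1), (4,4,1), but they are not collinear. -/
def Collin3 (n : ℕ) (p q r : ZMod n × ZMod n) : Prop :=
  ∃ a b t1 t2 w1 w2 w3 : ZMod n,
    a + w1 * t1 = p.1 ∧ b + w1 * t2 = p.2 ∧
    a + w2 * t1 = q.1 ∧ b + w2 * t2 = q.2 ∧
    a + w3 * t1 = r.1 ∧ b + w3 * t2 = r.2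

lemma aux : ∀ x y t1 t2 : ZMod 8,
    ¬ (x * t1 = 2 ∧ x * t2 = 4 ∧ y * t1 = 4 ∧ y * t2 = 4) := by decide

theorem stmt3 :
    (!![(0 : ZMod 8), 0, 1; 2, 4, 1; 4, 4, 1]).det = 0 ∧
    ¬ Collin3 8 (0, 0) (2, 4) (4, 4) := by
  refine ⟨by decide, ?_⟩
  rintro ⟨a, b, t1, t2, w1, w2, w3, h1, h2, h3, h4, h5, h6⟩
  exact aux (w2 - w1) (w3 - w1) t1 t2
    ⟨by linear_combination h3 - h1, by linear_combination h4 - h2,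
     by linear_combination h5 - h1, by linear_combination h6 - h2⟩
end

section
/- Three points p1, p2, p3 in Z_{ab} × Z_{ab}, where a and b are coprime positive integers greater than 1, are collinear if and only if their projections to Z_a² are collinear and their projections to Z_b² are collinear. -/
theorem stmt4 (a b : ℕ) (ha : 1 < a) (hb : 1 < b) (hab : Nat.Coprime a b)
    (p1 p2 p3 : ZMod (a * b) × ZMod (a * b)) :
    Collin3 (a * b) p1 p2 p3 ↔
      (Collin3 a (ZMod.castHom (dvd_mul_right a b) (ZMod a) p1.1,
                  ZMod.castHom (dvd_mul_right a b) (ZMod a) p1.2)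
                 (ZMod.castHom (dvd_mul_right a b) (ZMod a) p2.1,
                  ZMod.castHom (dvd_mul_right a b) (ZMod a) p2.2)
                 (ZMod.castHom (dvd_mul_right a b) (ZMod a) p3.1,
                  ZMod.castHom (dvd_mul_right a b) (ZMod a) p3.2) ∧
       Collin3 b (ZMod.castHom (dvd_mul_left b a) (ZMod b) p1.1,
                  ZMod.castHom (dvd_mul_left b a) (ZMod b) p1.2)
                 (ZMod.castHom (dvd_mul_left b a) (ZMod b) p2.1,
                  ZMod.castHom (dvd_mul_left b a) (ZMod b) p2.2)
                 (ZMod.castHom (dvd_mul_left b a) (ZMod b) p3.1,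
                  ZMod.castHom (dvd_mul_left b a) (ZMod b) p3.2)) := by
  set fa := ZMod.castHom (dvd_mul_right a b) (ZMod a)
  set fb := ZMod.castHom (dvd_mul_left b a) (ZMod b)
  set f : ZMod (a * b) →+* ZMod a × ZMod b := fa.prod fb with hf
  have hfe : ⇑f = ⇑(ZMod.chineseRemainder hab) := by
    funext x
    apply Prod.ext
    · simp [hf, fa, ZMod.chineseRemainder, Prod.fst_zmod_cast]
    · simp [hf, fb, ZMod.chineseRemainder, Prod.snd_zmod_cast]
  have hbij : Function.Bijective f := hfe ▸ (ZMod.chineseRemainder hab).bijective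
  constructor
  · rintro ⟨A, B, t1, t2, w1, w2, w3, h1, h2, h3, h4, h5, h6⟩
    refine ⟨⟨fa A, fa B, fa t1, fa t2, fa w1, fa w2, fa w3, ?_, ?_, ?_, ?_, ?_, ?_⟩,
            ⟨fb A, fb B, fb t1, fb t2, fb w1, fb w2, fb w3, ?_, ?_, ?_, ?_, ?_, ?_⟩⟩ <;>
      simp only [← h1, ← h2, ← h3, ← h4, ← h5, ← h6, map_add, map_mul]
  · rintro ⟨⟨A1, B1, s1, s2, u1, u2, u3, g1, g2, g3, g4, g5, g6⟩,
            ⟨A2, B2, r1, r2, v1, v2, v3, k1, k2, k3, k4, k5, k6⟩⟩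
    obtain ⟨A, hA⟩ := hbij.2 (A1, A2)
    obtain ⟨B, hB⟩ := hbij.2 (B1, B2)
    obtain ⟨T1, hT1⟩ := hbij.2 (s1, r1)
    obtain ⟨T2, hT2⟩ := hbij.2 (s2, r2)
    obtain ⟨W1, hW1⟩ := hbij.2 (u1, v1)
    obtain ⟨W2, hW2⟩ := hbij.2 (u2, v2)
    obtain ⟨W3, hW3⟩ := hbij.2 (u3, v3)
    have key : ∀ (X Y Z : ZMod (a * b)) (x1 y1 z1 : ZMod a) (x2 y2 z2 : ZMod b)
        (p : ZMod (a * b)), f X = (x1, x2) → f Y = (y1, y2) → f Z = (z1, z2) →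
        x1 + y1 * z1 = fa p → x2 + y2 * z2 = fb p → X + Y * Z = p := by
      intro X Y Z x1 y1 z1 x2 y2 z2 p hX hY hZ e1 e2
      apply hbij.1
      rw [map_add, map_mul, hX, hY, hZ]
      apply Prod.ext
      · simpa [hf] using e1
      · simpa [hf] using e2
    exact ⟨A, B, T1, T2, W1, W2, W3,
      key A W1 T1 A1 u1 s1 A2 v1 r1 _ hA hW1 hT1 g1 k1,
      key B W1 T2 B1 u1 s2 B2 v1 r2 _ hB hW1 hT2 g2 k2,
      key A W2 T1 A1 u2 s1 A2 v2 r1 _ hA hW2 hT1 g3 k3,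
      key B W2 T2 B1 u2 s2 B2 v2 r2 _ hB hW2 hT2 g4 k4,
      key A W3 T1 A1 u3 s1 A2 v3 r1 _ hA hW3 hT1 g5 k5,
      key B W3 T2 B1 u3 s2 B2 v3 r2 _ hB hW3 hT2 g6 k6⟩
end

section
/- Let p be a prime and r ≥ 2. Suppose u2, v2, u3, v3 are integers all divisible by p. Then the points (0,0), (ū2, v̄2), (ū3, v̄3) in Z_{p^r}² (where x̄ denotes reduction mod p^r) are collinear if and only if the points (0,0), (u2/p mod p^{r-1}, v2/p mod p^{r-1}), (u3/p mod p^{r-1}, v3/p mod p^{r-1}) in Z_{p^{r-1}}² are collinear. -/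
def CollinZero (n : ℕ) (u2 v2 u3 v3 : ZMod n) : Prop :=
  ∃ t1 t2 w2 w3 : ZMod n,
    w2 * t1 = u2 ∧ w3 * t1 = u3 ∧ w2 * t2 = v2 ∧ w3 * t2 = v3

lemma collin_int (n : ℕ) (u2 v2 u3 v3 : ℤ) :
    CollinZero n (u2 : ZMod n) (v2 : ZMod n) (u3 : ZMod n) (v3 : ZMod n) ↔
    ∃ t1 t2 w2 w3 : ℤ, (n:ℤ) ∣ w2*t1 - u2 ∧ (n:ℤ) ∣ w3*t1 - u3 ∧
      (n:ℤ) ∣ w2*t2 - v2 ∧ (n:ℤ) ∣ w3*t2 - v3 := by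
  constructor
  · rintro ⟨t1, t2, w2, w3, h1, h2, h3, h4⟩
    obtain ⟨T1, rfl⟩ := ZMod.intCast_surjective t1
    obtain ⟨T2, rfl⟩ := ZMod.intCast_surjective t2
    obtain ⟨W2, rfl⟩ := ZMod.intCast_surjective w2
    obtain ⟨W3, rfl⟩ := ZMod.intCast_surjective w3
    refine ⟨T1, T2, W2, W3, ?_, ?_, ?_, ?_⟩ <;>
      rw [← ZMod.intCast_zmod_eq_zero_iff_dvd] <;> push_cast <;>
      simp [h1, h2, h3, h4, sub_eq_zero]
  · rintro ⟨t1, t2, w2, w3, h1, h2, h3, h4⟩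
    refine ⟨t1, t2, w2, w3, ?_, ?_, ?_, ?_⟩
    · have := (ZMod.intCast_zmod_eq_zero_iff_dvd _ n).2 h1
      push_cast at this; exact sub_eq_zero.mp this
    · have := (ZMod.intCast_zmod_eq_zero_iff_dvd _ n).2 h2
      push_cast at this; exact sub_eq_zero.mp this
    · have := (ZMod.intCast_zmod_eq_zero_iff_dvd _ n).2 h3
      push_cast at this; exact sub_eq_zero.mp this
    · have := (ZMod.intCast_zmod_eq_zero_iff_dvd _ n).2 h4
      push_cast at this; exact sub_eq_zero.mp this

lemma cancel_p {p M b : ℤ} (hp0 : p ≠ 0) (h : p * M ∣ p * b) : M ∣ b :=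
  (mul_dvd_mul_iff_left hp0).1 h

theorem stmt5 (p : ℕ) (hp : p.Prime) (r : ℕ) (hr : 2 ≤ r)
    (u2 v2 u3 v3 : ℤ)
    (hu2 : (p : ℤ) ∣ u2) (hv2 : (p : ℤ) ∣ v2)
    (hu3 : (p : ℤ) ∣ u3) (hv3 : (p : ℤ) ∣ v3) :
    CollinZero (p ^ r) (u2 : ZMod (p ^ r)) (v2 : ZMod (p ^ r))
      (u3 : ZMod (p ^ r)) (v3 : ZMod (p ^ r)) ↔
    CollinZero (p ^ (r - 1))
      ((u2 / (p : ℤ) : ℤ) : ZMod (p ^ (r - 1)))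
      ((v2 / (p : ℤ) : ℤ) : ZMod (p ^ (r - 1)))
      ((u3 / (p : ℤ) : ℤ) : ZMod (p ^ (r - 1)))
      ((v3 / (p : ℤ) : ℤ) : ZMod (p ^ (r - 1))) := by
  obtain ⟨a2, rfl⟩ := hu2
  obtain ⟨b2, rfl⟩ := hv2
  obtain ⟨a3, rfl⟩ := hu3
  obtain ⟨b3, rfl⟩ := hv3
  have hp0 : (p:ℤ) ≠ 0 := by exact_mod_cast hp.ne_zero
  have hpp : Prime (p:ℤ) := Nat.prime_iff_prime_int.mp hp
  rw [Int.mul_ediv_cancel_left a2 hp0, Int.mul_ediv_cancel_left b2 hp0,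
      Int.mul_ediv_cancel_left a3 hp0, Int.mul_ediv_cancel_left b3 hp0,
      collin_int, collin_int]
  have hNM : ((p^r : ℕ) : ℤ) = (p:ℤ) * ((p^(r-1):ℕ):ℤ) := by
    push_cast
    rw [← pow_succ']
    congr 1
    omega
  set M : ℤ := ((p^(r-1):ℕ):ℤ) with hM
  constructor
  · rintro ⟨t1, t2, w2, w3, h1, h2, h3, h4⟩
    rw [hNM] at h1 h2 h3 h4
    -- extract p ∣ w_i * t_j for each pair
    have key : ∀ w t a : ℤ, (p:ℤ) * M ∣ w*t - (p:ℤ)*a → (p:ℤ) ∣ w*t := by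
      intro w t a h
      have hd : (p:ℤ) ∣ w*t - (p:ℤ)*a := dvd_trans (dvd_mul_right _ _) h
      have := dvd_add hd (dvd_mul_right (p:ℤ) a)
      simpa using this
    by_cases hw : (p:ℤ) ∣ w2 ∧ (p:ℤ) ∣ w3
    · obtain ⟨⟨x2, rfl⟩, ⟨x3, rfl⟩⟩ := hw
      refine ⟨t1, t2, x2, x3, ?_, ?_, ?_, ?_⟩
      · exact cancel_p hp0 (by rw [show (p:ℤ)*(x2*t1 - a2) = (p:ℤ)*x2*t1 - (p:ℤ)*a2 by ring]; exact h1)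
      · exact cancel_p hp0 (by rw [show (p:ℤ)*(x3*t1 - a3) = (p:ℤ)*x3*t1 - (p:ℤ)*a3 by ring]; exact h2)
      · exact cancel_p hp0 (by rw [show (p:ℤ)*(x2*t2 - b2) = (p:ℤ)*x2*t2 - (p:ℤ)*b2 by ring]; exact h3)
      · exact cancel_p hp0 (by rw [show (p:ℤ)*(x3*t2 - b3) = (p:ℤ)*x3*t2 - (p:ℤ)*b3 by ring]; exact h4)
    · -- then p ∣ t1 and p ∣ t2
      have ht1 : (p:ℤ) ∣ t1 ∧ (p:ℤ) ∣ t2 := by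
        constructor
        · rcases hpp.dvd_mul.mp (key _ _ _ h1) with h | h
          · rcases hpp.dvd_mul.mp (key _ _ _ h2) with h' | h'
            · exact absurd ⟨h, h'⟩ hw
            · -- p ∣ t1
              exact h'
          · exact h
        · rcases hpp.dvd_mul.mp (key _ _ _ h3) with h | h
          · rcases hpp.dvd_mul.mp (key _ _ _ h4) with h' | h'
            · exact absurd ⟨h, h'⟩ hw
            · exact h'
          · exact h
      obtain ⟨⟨s1, rfl⟩, ⟨s2, rfl⟩⟩ := ht1
      refine ⟨s1, s2, w2, w3, ?_, ?_, ?_, ?_⟩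
      · exact cancel_p hp0 (by rw [show (p:ℤ)*(w2*s1 - a2) = w2*((p:ℤ)*s1) - (p:ℤ)*a2 by ring]; exact h1)
      · exact cancel_p hp0 (by rw [show (p:ℤ)*(w3*s1 - a3) = w3*((p:ℤ)*s1) - (p:ℤ)*a3 by ring]; exact h2)
      · exact cancel_p hp0 (by rw [show (p:ℤ)*(w2*s2 - b2) = w2*((p:ℤ)*s2) - (p:ℤ)*b2 by ring]; exact h3)
      · exact cancel_p hp0 (by rw [show (p:ℤ)*(w3*s2 - b3) = w3*((p:ℤ)*s2) - (p:ℤ)*b3 by ring]; exact h4)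
  · rintro ⟨t1, t2, w2, w3, h1, h2, h3, h4⟩
    refine ⟨(p:ℤ)*t1, (p:ℤ)*t2, w2, w3, ?_, ?_, ?_, ?_⟩ <;> rw [hNM]
    · rw [show w2*((p:ℤ)*t1) - (p:ℤ)*a2 = (p:ℤ)*(w2*t1 - a2) by ring]
      exact mul_dvd_mul_left _ h1
    · rw [show w3*((p:ℤ)*t1) - (p:ℤ)*a3 = (p:ℤ)*(w3*t1 - a3) by ring]
      exact mul_dvd_mul_left _ h2
    · rw [show w2*((p:ℤ)*t2) - (p:ℤ)*b2 = (p:ℤ)*(w2*t2 - b2) by ring]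
      exact mul_dvd_mul_left _ h3
    · rw [show w3*((p:ℤ)*t2) - (p:ℤ)*b3 = (p:ℤ)*(w3*t2 - b3) by ring]
      exact mul_dvd_mul_left _ h4
end

section
/- Let p be a prime, r ≥ 1, and u2, v2, u3, v3 ∈ Z_{p^r} such that at least one of u2, u3, v2, v3 is a unit in Z_{p^r}. If u2·v3 − u3·v2 = 0 in Z_{p^r}, then the three points (0,0), (u2,v2), (u3,v3) in Z_{p^r}² are collinear. -/
/-! When `u₂` is a unit, `(u₃, v₃) = u₃ u₂⁻¹ • (u₂, v₂)`, the second coordinate because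
`u₂ v₃ = u₃ v₂`. Swapping the two points or the two coordinates keeps `u₂ v₃ = u₃ v₂` and moves
any of the four entries into the place of `u₂`. -/

variable {M : Type*} [CommMonoid M]

def CollinearWithOrigin (u2 v2 u3 v3 : M) : Prop :=
  ∃ t1 t2 w2 w3 : M, w2 * t1 = u2 ∧ w3 * t1 = u3 ∧ w2 * t2 = v2 ∧ w3 * t2 = v3

namespace CollinearWithOrigin

variable {u2 v2 u3 v3 : M}

theorem swap_points (h : CollinearWithOrigin u2 v2 u3 v3) : CollinearWithOrigin u3 v3 u2 v2 :=
  let ⟨t1, t2, w2, w3, h1, h2, h3, h4⟩ := h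
  ⟨t1, t2, w3, w2, h2, h1, h4, h3⟩

theorem swap_coords (h : CollinearWithOrigin u2 v2 u3 v3) : CollinearWithOrigin v2 u2 v3 u3 :=
  let ⟨t1, t2, w2, w3, h1, h2, h3, h4⟩ := h
  ⟨t2, t1, w2, w3, h3, h4, h1, h2⟩

theorem of_isUnit (hu : IsUnit u2) (h : u2 * v3 = u3 * v2) : CollinearWithOrigin u2 v2 u3 v3 := by
  obtain ⟨u, rfl⟩ := hu
  refine ⟨u, v2, 1, u3 * ↑u⁻¹, one_mul _, Units.inv_mul_cancel_right _ _, one_mul _, ?_⟩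
  calc u3 * ↑u⁻¹ * v2 = ↑u⁻¹ * (u3 * v2) := by ac_rfl
    _ = ↑u⁻¹ * (↑u * v3) := by rw [h]
    _ = v3 := Units.inv_mul_cancel_left _ _

theorem of_mul_eq_mul (hu : IsUnit u2 ∨ IsUnit u3 ∨ IsUnit v2 ∨ IsUnit v3)
    (h : u2 * v3 = u3 * v2) : CollinearWithOrigin u2 v2 u3 v3 := by
  rcases hu with hu | hu | hu | hu
  · exact of_isUnit hu h
  · exact (of_isUnit hu h.symm).swap_points
  · exact (of_isUnit hu (by rw [mul_comm v2, mul_comm v3, h])).swap_coords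
  · exact (of_isUnit hu (by rw [mul_comm v3, mul_comm v2, h])).swap_coords.swap_points

end CollinearWithOrigin

theorem stmt6_general (p : ℕ) (r : ℕ)
    (u2 v2 u3 v3 : ZMod (p ^ r))
    (hu : IsUnit u2 ∨ IsUnit u3 ∨ IsUnit v2 ∨ IsUnit v3)
    (h : u2 * v3 - u3 * v2 = 0) :
    CollinZero (p ^ r) u2 v2 u3 v3 :=
  CollinearWithOrigin.of_mul_eq_mul hu (sub_eq_zero.mp h)

theorem stmt6 (p : ℕ) (hp : p.Prime) (r : ℕ) (hr : 1 ≤ r)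
    (u2 v2 u3 v3 : ZMod (p ^ r))
    (hu : IsUnit u2 ∨ IsUnit u3 ∨ IsUnit v2 ∨ IsUnit v3)
    (h : u2 * v3 - u3 * v2 = 0) :
    CollinZero (p ^ r) u2 v2 u3 v3 :=
  stmt6_general p r u2 v2 u3 v3 hu h
end

section
/- For a prime p and r ≥ 1, the number of lines in Z_{p^r} × Z_{p^r} equals (p+1)·p^{2r-1}. -/
/-!
A line `{(a + w t₁, b + w t₂)}` in `ℤ/p^r × ℤ/p^r` has `p^r` points exactly when `t₁` or `t₂`
is a unit: if both are multiples of `p`, the parameters `0` and `p^(r-1)` give the same point.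
Dividing by that unit and reparametrising, every such line is uniquely either a graph
`y = m x + c` (`t₁` a unit) or `x = t y + d` with `t` a nonunit (`t₁` a nonunit, `t₂` a unit).
There are `p^r · p^r` of the first kind and `p^(r-1) · p^r` of the second, since `ℤ/p^r` has
`p^r - φ(p^r) = p^(r-1)` nonunits.
-/

def IsLine (k : ℕ) (L : Set (ZMod k × ZMod k)) : Prop :=
  ∃ a b t1 t2 : ZMod k, L = {p | ∃ w : ZMod k, p = (a + w * t1, b + w * t2)}

open Set Function

theorem Set.ncard_range_lt_of_not_injective {α β : Type*} [Finite α] {f : α → β}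
    (hf : ¬Injective f) : (range f).ncard < Nat.card α := by
  rw [← image_univ, ← ncard_univ]
  refine (ncard_image_le).lt_of_ne fun h => hf ?_
  exact injOn_univ.1 (injOn_of_ncard_image_eq h)

namespace PlaneLine

variable {R : Type*} [CommRing R]

def slopeLine (m c : R) : Set (R × R) := range fun x => (x, c + x * m)

def steepLine (t d : R) : Set (R × R) := range fun y => (d + y * t, y)

theorem mem_slopeLine {m c : R} {q : R × R} : q ∈ slopeLine m c ↔ q.2 = c + q.1 * m :=
  ⟨by rintro ⟨x, rfl⟩; rfl, fun h => ⟨q.1, Prod.ext rfl h.symm⟩⟩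

theorem mem_steepLine {t d : R} {q : R × R} : q ∈ steepLine t d ↔ q.1 = d + q.2 * t :=
  ⟨by rintro ⟨y, rfl⟩; rfl, fun h => ⟨q.2, Prod.ext h.symm rfl⟩⟩

theorem range_eq_slopeLine (a b t₂ : R) (u : Rˣ) :
    range (fun w => (a + w * u, b + w * t₂)) = slopeLine (t₂ * ↑u⁻¹) (b - a * (t₂ * ↑u⁻¹)) := by
  have hsurj : Surjective fun w : R => a + w * u := fun x => ⟨(x - a) * ↑u⁻¹, by simp [mul_assoc]⟩
  unfold slopeLine; conv_rhs => rw [← hsurj.range_comp]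
  refine congrArg range (funext fun w => Prod.ext rfl ?_)
  dsimp only [comp_apply]
  linear_combination (-(w * t₂)) * u.mul_inv

theorem range_eq_steepLine (a b t₁ : R) (u : Rˣ) :
    range (fun w => (a + w * t₁, b + w * u)) = steepLine (t₁ * ↑u⁻¹) (a - b * (t₁ * ↑u⁻¹)) := by
  have hsurj : Surjective fun w : R => b + w * u := fun y => ⟨(y - b) * ↑u⁻¹, by simp [mul_assoc]⟩
  unfold steepLine; conv_rhs => rw [← hsurj.range_comp]
  refine congrArg range (funext fun w => Prod.ext ?_ rfl)
  dsimp only [comp_apply]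
  linear_combination (-(w * t₁)) * u.mul_inv

theorem ncard_slopeLine [Finite R] (m c : R) : (slopeLine m c).ncard = Nat.card R :=
  ncard_range_of_injective fun _ _ h => congrArg Prod.fst h

theorem ncard_steepLine [Finite R] (t d : R) : (steepLine t d).ncard = Nat.card R :=
  ncard_range_of_injective fun _ _ h => congrArg Prod.snd h

theorem slopeLine_inj {m c m' c' : R} : slopeLine m c = slopeLine m' c' ↔ m = m' ∧ c = c' := by
  refine ⟨fun h => ?_, fun h => by rw [h.1, h.2]⟩
  have h₀ : ((0 : R), c) ∈ slopeLine m' c' := h ▸ mem_slopeLine.2 (by simp)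
  have h₁ : ((1 : R), c + m) ∈ slopeLine m' c' := h ▸ mem_slopeLine.2 (by simp)
  rw [mem_slopeLine] at h₀ h₁
  simp only [zero_mul, add_zero, one_mul] at h₀ h₁
  exact ⟨by linear_combination h₁ - h₀, h₀⟩

theorem steepLine_inj {t d t' d' : R} : steepLine t d = steepLine t' d' ↔ t = t' ∧ d = d' := by
  refine ⟨fun h => ?_, fun h => by rw [h.1, h.2]⟩
  have h₀ : (d, (0 : R)) ∈ steepLine t' d' := h ▸ mem_steepLine.2 (by simp)
  have h₁ : (d + t, (1 : R)) ∈ steepLine t' d' := h ▸ mem_steepLine.2 (by simp)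
  rw [mem_steepLine] at h₀ h₁
  simp only [zero_mul, add_zero, one_mul] at h₀ h₁
  exact ⟨by linear_combination h₁ - h₀, h₀⟩

theorem slopeLine_ne_steepLine {t : R} (ht : ¬IsUnit t) (m c d : R) :
    slopeLine m c ≠ steepLine t d := by
  intro h
  have h₀ : (d, (0 : R)) ∈ slopeLine m c := h ▸ mem_steepLine.2 (by simp)
  have h₁ : (d + t, (1 : R)) ∈ slopeLine m c := h ▸ mem_steepLine.2 (by simp)
  rw [mem_slopeLine] at h₀ h₁
  exact ht (.of_mul_eq_one m (by linear_combination h₀ - h₁))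

def normalFormLine : (R × R) ⊕ ({t : R // ¬IsUnit t} × R) → Set (R × R) :=
  Sum.elim (fun mc => slopeLine mc.1 mc.2) (fun td => steepLine td.1 td.2)

theorem normalFormLine_injective : Injective (normalFormLine (R := R)) := by
  rintro (⟨m, c⟩ | ⟨t, d⟩) (⟨m', c'⟩ | ⟨t', d'⟩) h <;>
    simp only [normalFormLine, Sum.elim_inl, Sum.elim_inr] at h
  · rw [(slopeLine_inj.1 h).1, (slopeLine_inj.1 h).2]
  · exact absurd h (slopeLine_ne_steepLine t'.2 m c d')
  · exact absurd h.symm (slopeLine_ne_steepLine t.2 m' c' d)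
  · rw [Subtype.ext (steepLine_inj.1 h).1, (steepLine_inj.1 h).2]

end PlaneLine

namespace ZMod

variable {p r : ℕ}

theorem pow_pred_mul_eq_zero_of_not_isUnit (hp : p.Prime) {t : ZMod (p ^ r)} (ht : ¬IsUnit t) :
    ((p ^ (r - 1) : ℕ) : ZMod (p ^ r)) * t = 0 := by
  have : NeZero (p ^ r) := ⟨pow_ne_zero r hp.ne_zero⟩
  rw [← natCast_zmod_val t, isUnit_iff_coprime] at ht
  have hdvd : p ∣ t.val := by
    by_contra h
    exact ht (((hp.coprime_iff_not_dvd.2 h)).symm.pow_right r)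
  rw [← natCast_zmod_val t, ← Nat.cast_mul, natCast_eq_zero_iff]
  calc p ^ r ∣ p ^ (r - 1) * p := by rw [← pow_succ]; exact pow_dvd_pow p (by omega)
    _ ∣ p ^ (r - 1) * t.val := mul_dvd_mul_left _ hdvd

theorem natCast_pow_pred_ne_zero (hp : p.Prime) (hr : 1 ≤ r) :
    ((p ^ (r - 1) : ℕ) : ZMod (p ^ r)) ≠ 0 := by
  rw [Ne, natCast_eq_zero_iff]
  exact Nat.not_dvd_of_pos_of_lt (pow_pos hp.pos _) (Nat.pow_lt_pow_right hp.one_lt (by omega))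

theorem card_nonunits_prime_pow (hp : p.Prime) (hr : 1 ≤ r) :
    Nat.card {t : ZMod (p ^ r) // ¬IsUnit t} = p ^ (r - 1) := by
  have : NeZero (p ^ r) := ⟨pow_ne_zero r hp.ne_zero⟩
  classical
  have hunits : Nat.card {t : ZMod (p ^ r) // IsUnit t} = Nat.totient (p ^ r) := by
    rw [← card_units_eq_totient, ← Nat.card_eq_fintype_card]
    exact Nat.card_range_of_injective Units.val_injective
  obtain ⟨s, rfl⟩ := Nat.exists_eq_add_of_le' hr
  rw [Nat.card_eq_fintype_card, Fintype.card_subtype_compl, ← Nat.card_eq_fintype_card,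
    ← Nat.card_eq_fintype_card, hunits, Nat.card_zmod, Nat.totient_prime_pow_succ hp,
    Nat.add_sub_cancel, pow_succ, Nat.mul_sub, mul_one,
    Nat.sub_sub_self (Nat.le_mul_of_pos_right _ hp.pos)]

end ZMod

open PlaneLine

theorem isLine_iff {k : ℕ} {L : Set (ZMod k × ZMod k)} :
    IsLine k L ↔ ∃ a b t₁ t₂ : ZMod k, L = range fun w => (a + w * t₁, b + w * t₂) := by
  have hrange (f : ZMod k → ZMod k × ZMod k) : {q | ∃ w, q = f w} = range f := by
    ext; simp [eq_comm]
  simp only [IsLine, hrange]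

theorem isLine_slopeLine {k : ℕ} (m c : ZMod k) : IsLine k (slopeLine m c) :=
  isLine_iff.2 ⟨0, c, 1, m, by simp [slopeLine]⟩

theorem isLine_steepLine {k : ℕ} (t d : ZMod k) : IsLine k (steepLine t d) :=
  isLine_iff.2 ⟨d, 0, t, 1, by simp [steepLine]⟩

section PrimePower

variable {p r : ℕ}

theorem ncard_range_lt_of_not_isUnit (hp : p.Prime) (hr : 1 ≤ r) {a b t₁ t₂ : ZMod (p ^ r)}
    (h₁ : ¬IsUnit t₁) (h₂ : ¬IsUnit t₂) :
    (range fun w => (a + w * t₁, b + w * t₂)).ncard < p ^ r := by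
  have : NeZero (p ^ r) := ⟨pow_ne_zero r hp.ne_zero⟩
  refine (ncard_range_lt_of_not_injective fun hinj =>
    ZMod.natCast_pow_pred_ne_zero hp hr (@hinj _ 0 ?_)).trans_eq (Nat.card_zmod _)
  simp only [ZMod.pow_pred_mul_eq_zero_of_not_isUnit hp h₁,
    ZMod.pow_pred_mul_eq_zero_of_not_isUnit hp h₂, zero_mul]

theorem setOf_isLine_ncard_eq_range (hp : p.Prime) (hr : 1 ≤ r) :
    {L | IsLine (p ^ r) L ∧ L.ncard = p ^ r} = range (normalFormLine (R := ZMod (p ^ r))) := by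
  have : NeZero (p ^ r) := ⟨pow_ne_zero r hp.ne_zero⟩
  ext L
  constructor
  · rintro ⟨hL, hcard⟩
    obtain ⟨a, b, t₁, t₂, rfl⟩ := isLine_iff.1 hL
    by_cases h₁ : IsUnit t₁
    · obtain ⟨u, rfl⟩ := h₁
      exact ⟨.inl (_, _), (range_eq_slopeLine a b t₂ u).symm⟩
    by_cases h₂ : IsUnit t₂
    · obtain ⟨u, rfl⟩ := h₂
      have ht : ¬IsUnit (t₁ * ↑u⁻¹) := by rwa [Units.isUnit_mul_units]
      exact ⟨.inr (⟨_, ht⟩, _), (range_eq_steepLine a b t₁ u).symm⟩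
    exact absurd hcard (ncard_range_lt_of_not_isUnit hp hr h₁ h₂).ne
  · rintro ⟨⟨m, c⟩ | ⟨t, d⟩, rfl⟩
    · exact ⟨isLine_slopeLine m c, (ncard_slopeLine m c).trans (Nat.card_zmod _)⟩
    · exact ⟨isLine_steepLine t.1 d, (ncard_steepLine t.1 d).trans (Nat.card_zmod _)⟩

end PrimePower

theorem stmt7 (p : ℕ) (hp : p.Prime) (r : ℕ) (hr : 1 ≤ r) :
    {L : Set (ZMod (p ^ r) × ZMod (p ^ r)) |
      IsLine (p ^ r) L ∧ L.ncard = p ^ r}.ncard = (p + 1) * p ^ (2 * r - 1) := by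
  have : NeZero (p ^ r) := ⟨pow_ne_zero r hp.ne_zero⟩
  rw [setOf_isLine_ncard_eq_range hp hr, ← Nat.card_coe_set_eq,
    Nat.card_range_of_injective normalFormLine_injective, Nat.card_sum, Nat.card_prod,
    Nat.card_prod, ZMod.card_nonunits_prime_pow hp hr, Nat.card_zmod]
  obtain ⟨s, rfl⟩ := Nat.exists_eq_add_of_le' hr
  rw [show 2 * (s + 1) - 1 = 2 * s + 1 by omega, Nat.add_sub_cancel]
  ring
end

section
/- For coprime integers n, m > 1, every cap in Z_{nm} × Z_{nm} has cardinality at most min(n · m2(Z_m²), m2(Z_n²) · m), where m2(Z_k²) denotes the maximum cardinality of a cap in Z_k². -/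
def Collin (k : ℕ) (p q r : ZMod k × ZMod k) : Prop :=
  ∃ L : Set (ZMod k × ZMod k), IsLine k L ∧ p ∈ L ∧ q ∈ L ∧ r ∈ L

def IsCap (k : ℕ) (C : Set (ZMod k × ZMod k)) : Prop :=
  ∀ p ∈ C, ∀ q ∈ C, ∀ r ∈ C, p ≠ q → p ≠ r → q ≠ r → ¬ Collin k p q r

noncomputable def maxCap (k : ℕ) : ℕ :=
  sSup {s | ∃ C : Set (ZMod k × ZMod k), IsCap k C ∧ C.ncard = s}

lemma line_through (k : ℕ) (u v : ZMod k × ZMod k) :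
    ∃ L, IsLine k L ∧ u ∈ L ∧ v ∈ L := by
  refine ⟨_, ⟨u.1, u.2, v.1 - u.1, v.2 - u.2, rfl⟩, ⟨0, ?_⟩, ⟨1, ?_⟩⟩ <;>
    simp [Prod.ext_iff]

lemma collin_cases {k : ℕ} (x y z : ZMod k × ZMod k) (h : x = y ∨ x = z ∨ y = z) :
    Collin k x y z := by
  rcases h with h | h | h
  · obtain ⟨L, hL, hx, hz⟩ := line_through k x z
    exact ⟨L, hL, hx, h ▸ hx, hz⟩
  · obtain ⟨L, hL, hx, hy⟩ := line_through k x y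
    exact ⟨L, hL, hx, hy, h ▸ hx⟩
  · obtain ⟨L, hL, hx, hy⟩ := line_through k x y
    exact ⟨L, hL, hx, hy, h ▸ hy⟩

lemma collin_vert {k : ℕ} (x y z : ZMod k × ZMod k) (h1 : x.1 = y.1) (h2 : x.1 = z.1) :
    Collin k x y z := by
  refine ⟨{p | ∃ w : ZMod k, p = (x.1 + w * 0, 0 + w * 1)}, ⟨x.1, 0, 0, 1, rfl⟩,
    ⟨x.2, ?_⟩, ⟨y.2, ?_⟩, ⟨z.2, ?_⟩⟩ <;> simp [Prod.ext_iff, ← h1, ← h2]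

lemma collin_lift {n m : ℕ} (h : Nat.Coprime n m)
    (p q r : ZMod (n * m) × ZMod (n * m))
    (hn : Collin n ((ZMod.chineseRemainder h p.1).1, (ZMod.chineseRemainder h p.2).1)
                   ((ZMod.chineseRemainder h q.1).1, (ZMod.chineseRemainder h q.2).1)
                   ((ZMod.chineseRemainder h r.1).1, (ZMod.chineseRemainder h r.2).1))
    (hm : Collin m ((ZMod.chineseRemainder h p.1).2, (ZMod.chineseRemainder h p.2).2)
                   ((ZMod.chineseRemainder h q.1).2, (ZMod.chineseRemainder h q.2).2)
                   ((ZMod.chineseRemainder h r.1).2, (ZMod.chineseRemainder h r.2).2)) :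
    Collin (n * m) p q r := by
  set e := ZMod.chineseRemainder h with he
  obtain ⟨Ln, ⟨a, b, t1, t2, rfl⟩, ⟨wp, hwp⟩, ⟨wq, hwq⟩, ⟨wr, hwr⟩⟩ := hn
  obtain ⟨Lm, ⟨a', b', t1', t2', rfl⟩, ⟨wp', hwp'⟩, ⟨wq', hwq'⟩, ⟨wr', hwr'⟩⟩ := hm
  refine ⟨_, ⟨e.symm (a, a'), e.symm (b, b'), e.symm (t1, t1'), e.symm (t2, t2'), rfl⟩,
    ⟨e.symm (wp, wp'), ?_⟩, ⟨e.symm (wq, wq'), ?_⟩, ⟨e.symm (wr, wr'), ?_⟩⟩ <;>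
  · rw [Prod.ext_iff] at *
    constructor <;> apply e.injective <;>
      simp_all [Prod.ext_iff, map_add, map_mul]

lemma bdd_caps (k : ℕ) [NeZero k] :
    BddAbove {s | ∃ C : Set (ZMod k × ZMod k), IsCap k C ∧ C.ncard = s} := by
  refine ⟨(Set.univ : Set (ZMod k × ZMod k)).ncard, ?_⟩
  rintro s ⟨D, _, rfl⟩
  exact Set.ncard_le_ncard (Set.subset_univ D) Set.finite_univ

lemma le_maxCap {k : ℕ} [NeZero k] {C : Set (ZMod k × ZMod k)} (hC : IsCap k C) :
    C.ncard ≤ maxCap k :=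
  le_csSup (bdd_caps k) ⟨C, hC, rfl⟩

lemma two_le_maxCap {k : ℕ} (hk : 1 < k) : 2 ≤ maxCap k := by
  haveI : NeZero k := ⟨by omega⟩
  haveI : Fact (1 < k) := ⟨hk⟩
  have hne : ((0 : ZMod k), (0 : ZMod k)) ≠ ((1 : ZMod k), (0 : ZMod k)) := by
    simp [Prod.ext_iff]
  have hcap : IsCap k {((0 : ZMod k), (0 : ZMod k)), ((1 : ZMod k), (0 : ZMod k))} := by
    intro p hp q hq r hr hpq hpr hqr
    simp only [Set.mem_insert_iff, Set.mem_singleton_iff] at hp hq hr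
    rcases hp with rfl | rfl <;> rcases hq with rfl | rfl <;> rcases hr with rfl | rfl <;>
      simp_all
  have := le_csSup (bdd_caps k) (⟨_, hcap, Set.ncard_pair hne⟩ :
    2 ∈ {s | ∃ C : Set (ZMod k × ZMod k), IsCap k C ∧ C.ncard = s})
  exact this

lemma aux_s10 (n m k : ℕ) (hk : k = n * m) (hn : 1 < n) (hm : 1 < m) (hnm : Nat.Coprime n m)
    (C : Set (ZMod k × ZMod k)) (hC : IsCap k C) : C.ncard ≤ n * maxCap m := by
  subst hk
  haveI : NeZero n := ⟨by omega⟩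
  haveI : NeZero m := ⟨by omega⟩
  haveI : NeZero (n * m) := ⟨by positivity⟩
  classical
  set e := ZMod.chineseRemainder hnm with he
  have hfin : C.Finite := Set.toFinite C
  set C' := hfin.toFinset with hC'
  have hcard : C.ncard = C'.card := Set.ncard_eq_toFinset_card C hfin
  rw [hcard]
  have key : C'.card = ∑ a : ZMod n, (C'.filter (fun p => (e p.1).1 = a)).card :=
    Finset.card_eq_sum_card_fiberwise (fun p _ => Finset.mem_univ _)
  rw [key]
  have fib : ∀ a : ZMod n, (C'.filter (fun p => (e p.1).1 = a)).card ≤ maxCap m := by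
    intro a
    set T := C'.filter (fun p => (e p.1).1 = a) with hT
    have hmemC : ∀ p ∈ T, p ∈ C := by
      intro p hp
      have := (Finset.mem_filter.mp hp).1
      exact hfin.mem_toFinset.mp this
    have hfst : ∀ p ∈ T, (e p.1).1 = a := fun p hp => (Finset.mem_filter.mp hp).2
    -- the mod-m projection
    set g : ZMod (n * m) × ZMod (n * m) → ZMod m × ZMod m :=
      fun p => ((e p.1).2, (e p.2).2) with hg
    by_cases h3 : T.card ≤ 2
    · exact h3.trans (two_le_maxCap hm)
    push_neg at h3
    have hinj : Set.InjOn g ↑T := by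
      intro p hp q hq hgpq
      by_contra hpq
      have hp' : p ∈ T := hp
      have hq' : q ∈ T := hq
      have : 0 < ((T.erase p).erase q).card := by
        have h1 : T.card - 2 ≤ ((T.erase p).erase q).card := by
          have := Finset.pred_card_le_card_erase (a := q) (s := T.erase p)
          have := Finset.pred_card_le_card_erase (a := p) (s := T)
          omega
        omega
      obtain ⟨r, hrT'⟩ := Finset.card_pos.mp this
      have hrq : r ≠ q := (Finset.mem_erase.mp hrT').1
      have hrp : r ≠ p := (Finset.mem_erase.mp (Finset.mem_erase.mp hrT').2).1
      have hrT : r ∈ T := (Finset.mem_erase.mp (Finset.mem_erase.mp hrT').2).2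
      have hColn : Collin n ((e p.1).1, (e p.2).1) ((e q.1).1, (e q.2).1)
          ((e r.1).1, (e r.2).1) := by
        apply collin_vert <;> simp [hfst p hp', hfst q hq', hfst r hrT]
      have hColm : Collin m ((e p.1).2, (e p.2).2) ((e q.1).2, (e q.2).2)
          ((e r.1).2, (e r.2).2) := by
        apply collin_cases
        left
        simpa [hg, Prod.ext_iff] using hgpq
      have := collin_lift hnm p q r hColn hColm
      exact hC p (hmemC p hp') q (hmemC q hq') r (hmemC r hrT) hpq
        (Ne.symm hrp) (Ne.symm hrq) this
    have himg : T.card = (T.image g).card := (Finset.card_image_of_injOn hinj).symm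
    rw [himg, ← Set.ncard_coe_finset]
    apply le_maxCap
    intro x hx y hy z hz hxy hxz hyz hcol
    simp only [Finset.coe_image, Set.mem_image, Finset.mem_coe] at hx hy hz
    obtain ⟨p, hpT, rfl⟩ := hx
    obtain ⟨q, hqT, rfl⟩ := hy
    obtain ⟨r, hrT, rfl⟩ := hz
    have hpq : p ≠ q := fun h => hxy (h ▸ rfl)
    have hpr : p ≠ r := fun h => hxz (h ▸ rfl)
    have hqr : q ≠ r := fun h => hyz (h ▸ rfl)
    have hColn : Collin n ((e p.1).1, (e p.2).1) ((e q.1).1, (e q.2).1)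
        ((e r.1).1, (e r.2).1) := by
      apply collin_vert <;> simp [hfst p hpT, hfst q hqT, hfst r hrT]
    have := collin_lift hnm p q r hColn hcol
    exact hC p (hmemC p hpT) q (hmemC q hqT) r (hmemC r hrT) hpq hpr hqr this
  calc ∑ a : ZMod n, (C'.filter (fun p => (e p.1).1 = a)).card
      ≤ ∑ _a : ZMod n, maxCap m := Finset.sum_le_sum (fun a _ => fib a)
    _ = n * maxCap m := by
        simp [Finset.sum_const, Finset.card_univ, ZMod.card]

theorem stmt10 (n m : ℕ) (hn : 1 < n) (hm : 1 < m) (hnm : Nat.Coprime n m)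
    (C : Set (ZMod (n * m) × ZMod (n * m))) (hC : IsCap (n * m) C) :
    C.ncard ≤ min (n * maxCap m) (maxCap n * m) := by
  refine le_min (aux_s10 n m (n * m) rfl hn hm hnm C hC) ?_
  have := aux_s10 m n (n * m) (Nat.mul_comm n m) hm hn hnm.symm C hC
  rwa [Nat.mul_comm (maxCap n) m]
end

section
/- Every cyclic subgroup of the additive group Z_n × Z_n is contained in some subgroup of order n. -/
lemma ord_aux (n : ℕ) [NeZero n] (a b : ℕ) (h : Nat.gcd a b = 1) :
    addOrderOf (((a : ZMod n), (b : ZMod n)) : ZMod n × ZMod n) = n := by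
  apply Nat.dvd_antisymm
  · apply addOrderOf_dvd_of_nsmul_eq_zero
    ext <;> simp [nsmul_eq_mul, ZMod.natCast_self]
  · have hk := addOrderOf_nsmul_eq_zero (((a : ZMod n), (b : ZMod n)) : ZMod n × ZMod n)
    set k := addOrderOf (((a : ZMod n), (b : ZMod n)) : ZMod n × ZMod n)
    have h1 : ((k * a : ℕ) : ZMod n) = 0 := by
      have := congrArg Prod.fst hk
      simpa [nsmul_eq_mul] using this
    have h2 : ((k * b : ℕ) : ZMod n) = 0 := by
      have := congrArg Prod.snd hk
      simpa [nsmul_eq_mul] using this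
    rw [ZMod.natCast_eq_zero_iff] at h1 h2
    have := Nat.dvd_gcd h1 h2
    rwa [Nat.gcd_mul_left, h, Nat.mul_one] at this

theorem stmt12 (n : ℕ) (hn : 1 ≤ n) (x : ZMod n × ZMod n) :
    ∃ H : AddSubgroup (ZMod n × ZMod n),
      Nat.card H = n ∧ AddSubgroup.zmultiples x ≤ H := by
  haveI : NeZero n := ⟨by omega⟩
  by_cases hx : x = 0
  · refine ⟨AddSubgroup.zmultiples (((1 : ZMod n), (0 : ZMod n))), ?_, ?_⟩
    · rw [Nat.card_zmultiples]
      simpa using ord_aux n 1 0 (by simp)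
    · rw [hx]
      intro z hz
      rcases AddSubgroup.mem_zmultiples_iff.mp hz with ⟨k, hk⟩
      simp at hk
      rw [← hk]
      exact zero_mem _
  · set A := x.1.val
    set B := x.2.val
    set g := Nat.gcd A B with hg
    have hgpos : 0 < g := by
      rcases Nat.eq_zero_or_pos g with h0 | h0
      · exfalso
        have hA : A = 0 := Nat.eq_zero_of_gcd_eq_zero_left h0
        have hB : B = 0 := Nat.eq_zero_of_gcd_eq_zero_right h0
        apply hx
        have h1 : x.1 = 0 := by rwa [← ZMod.val_eq_zero]
        have h2 : x.2 = 0 := by rwa [← ZMod.val_eq_zero]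
        exact Prod.ext h1 h2
      · exact h0
    set y : ZMod n × ZMod n := (((A / g : ℕ) : ZMod n), ((B / g : ℕ) : ZMod n)) with hy
    have hcop : Nat.gcd (A / g) (B / g) = 1 := Nat.coprime_div_gcd_div_gcd hgpos
    refine ⟨AddSubgroup.zmultiples y, ?_, ?_⟩
    · rw [Nat.card_zmultiples, ord_aux n _ _ hcop]
    · have hxy : x ∈ AddSubgroup.zmultiples y := by
        refine AddSubgroup.mem_zmultiples_iff.mpr ⟨(g : ℤ), ?_⟩
        have e1 : (g : ℤ) • y = (g : ℕ) • y := by simp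
        rw [e1, hy]
        ext
        · show g • ((A / g : ℕ) : ZMod n) = x.1
          rw [nsmul_eq_mul, ← Nat.cast_mul, Nat.mul_div_cancel' (Nat.gcd_dvd_left A B)]
          simp [A, ZMod.natCast_val, ZMod.cast_id]
        · show g • ((B / g : ℕ) : ZMod n) = x.2
          rw [nsmul_eq_mul, ← Nat.cast_mul, Nat.mul_div_cancel' (Nat.gcd_dvd_right A B)]
          simp [B, ZMod.natCast_val, ZMod.cast_id]
      intro z hz
      rcases AddSubgroup.mem_zmultiples_iff.mp hz with ⟨k, hk⟩
      rw [← hk]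
      exact zsmul_mem hxy k
end

section
/- The maximum cardinality of a cap in Z_8 × Z_8 is 8. -/
/-!
Three points `p, q, r` of `(ℤ/8)²` are collinear iff `q - p` and `r - p` are multiples of a common
vector; as divisibility in `ℤ/8` is total, this happens iff they have a common slope `c`
(`y = c x` or `x = c y`). Caps are preserved by affine automorphisms, so a cap with two points
differing by a primitive vector may be normalised to contain `0` and `(1, 0)`; otherwise it is a
translate of a subset of `2 (ℤ/8)²`. In both cases an exhaustive search shows that there are at
most `8` points, and an explicit cap of size `8` exists.
-/

section Lines

variable {k : ℕ}

theorem collin_iff_exists_smul {p q r : ZMod k × ZMod k} :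
    Collin k p q r ↔ ∃ t : ZMod k × ZMod k, ∃ a b : ZMod k, q - p = a • t ∧ r - p = b • t := by
  constructor
  · rintro ⟨L, ⟨a, b, t₁, t₂, rfl⟩, ⟨w₁, rfl⟩, ⟨w₂, rfl⟩, ⟨w₃, rfl⟩⟩
    refine ⟨(t₁, t₂), w₂ - w₁, w₃ - w₁, ?_, ?_⟩ <;> ext <;> simp <;> ring
  · rintro ⟨t, a, b, hq, hr⟩
    rw [sub_eq_iff_eq_add'] at hq hr
    exact ⟨_, ⟨p.1, p.2, t.1, t.2, rfl⟩, ⟨0, by simp⟩, ⟨a, hq⟩, ⟨b, hr⟩⟩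

theorem Collin.map (f : (ZMod k × ZMod k) →ᵃ[ZMod k] ZMod k × ZMod k) {p q r : ZMod k × ZMod k}
    (h : Collin k p q r) : Collin k (f p) (f q) (f r) := by
  obtain ⟨t, a, b, hq, hr⟩ := collin_iff_exists_smul.1 h
  have hf (x : ZMod k × ZMod k) : f x - f p = f.linear (x - p) := f.linearMap_vsub x p |>.symm
  exact collin_iff_exists_smul.2
    ⟨f.linear t, a, b, by rw [hf, hq, map_smul], by rw [hf, hr, map_smul]⟩

theorem IsCap.image {C : Set (ZMod k × ZMod k)} (hC : IsCap k C)
    (f : (ZMod k × ZMod k) ≃ᵃ[ZMod k] ZMod k × ZMod k) : IsCap k (f '' C) := by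
  rintro _ ⟨p, hp, rfl⟩ _ ⟨q, hq, rfl⟩ _ ⟨r, hr, rfl⟩ hpq hpr hqr hcol
  refine hC p hp q hq r hr (ne_of_apply_ne f hpq) (ne_of_apply_ne f hpr) (ne_of_apply_ne f hqr) ?_
  simpa using hcol.map f.symm.toAffineMap

end Lines

section Slopes

variable {R : Type*} [CommRing R]

theorem exists_smul_eq_iff_exists_slope [PreValuationRing R] (u v : R × R) :
    (∃ t : R × R, ∃ a b : R, u = a • t ∧ v = b • t) ↔
      ∃ c : R, (u.2 = c * u.1 ∧ v.2 = c * v.1) ∨ (u.1 = c * u.2 ∧ v.1 = c * v.2) := by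
  constructor
  · rintro ⟨t, a, b, rfl, rfl⟩
    obtain ⟨c, h | h⟩ := PreValuationRing.cond t.1 t.2
    · exact ⟨c, Or.inl ⟨by simp [← h]; ring, by simp [← h]; ring⟩⟩
    · exact ⟨c, Or.inr ⟨by simp [← h]; ring, by simp [← h]; ring⟩⟩
  · rintro ⟨c, ⟨hu, hv⟩ | ⟨hu, hv⟩⟩
    · exact ⟨(1, c), u.1, v.1, by ext <;> simp [hu, mul_comm], by ext <;> simp [hv, mul_comm]⟩
    · exact ⟨(c, 1), u.2, v.2, by ext <;> simp [hu, mul_comm], by ext <;> simp [hv, mul_comm]⟩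

theorem exists_linearEquiv_apply_eq_one_zero {u : R × R} (hu : IsUnit u.1 ∨ IsUnit u.2) :
    ∃ A : (R × R) ≃ₗ[R] R × R, A u = (1, 0) := by
  have key : ∀ u : R × R, IsUnit u.1 → ∃ A : (R × R) ≃ₗ[R] R × R, A u = (1, 0) := by
    rintro u ⟨a, ha⟩
    refine ⟨((LinearEquiv.smulOfUnit a).skewProd (LinearEquiv.refl R R) (u.2 • LinearMap.id)).symm,
      (LinearEquiv.symm_apply_eq _).2 ?_⟩
    ext <;> simp [LinearEquiv.smulOfUnit, Units.smul_def, ha]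
  rcases hu with hu | hu
  · exact key u hu
  · obtain ⟨A, hA⟩ := key u.swap hu
    exact ⟨(LinearEquiv.prodComm R R R).trans A, hA⟩

theorem exists_affineEquiv_apply_eq_zero_and_eq_one_zero {p q : R × R}
    (h : IsUnit (q - p).1 ∨ IsUnit (q - p).2) :
    ∃ f : (R × R) ≃ᵃ[R] R × R, f p = 0 ∧ f q = (1, 0) := by
  obtain ⟨A, hA⟩ := exists_linearEquiv_apply_eq_one_zero h
  exact ⟨(AffineEquiv.vaddConst R p).symm.trans A.toAffineEquiv, by simp, by simpa using hA⟩

end Slopes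

section Search

variable {α : Type*} (col : α → α → α → Bool) (n : ℕ)

def TripleFree (T : Set α) : Prop :=
  ∀ p ∈ T, ∀ q ∈ T, ∀ r ∈ T, p ≠ q → p ≠ r → q ≠ r → col p q r = false

theorem Finset.card_le_length_of_forall_mem [DecidableEq α] {S : Finset α} {l : List α}
    (h : ∀ s ∈ S, s ∈ l) : S.card ≤ l.length :=
  (Finset.card_le_card fun s hs => List.mem_toFinset.2 (h s hs)).trans (List.toFinset_card_le l)

variable {col} in
theorem TripleFree.mono {S T : Set α} (hT : TripleFree col T) (h : S ⊆ T) : TripleFree col S :=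
  fun p hp q hq r hr => hT p (h hp) q (h hq) r (h hr)

def capSearch : ℕ → List α → List α → Bool
  | 0, _, _ => true
  | fuel + 1, cur, cands =>
    if cands.length + cur.length ≤ n then true
    else
      match cands with
      | [] => true
      | c :: rest =>
        (cur.length < n &&
          capSearch fuel (c :: cur) (rest.filter fun s => cur.all fun p => !col p c s)) &&
        capSearch fuel cur rest

variable {col n}

theorem card_add_length_le_of_capSearch [DecidableEq α] {fuel : ℕ} {cur cands : List α}
    (hfuel : cands.length ≤ fuel) (hsearch : capSearch col n fuel cur cands = true)
    (hcur : cur.length ≤ n) {S : Finset α} (hS : ∀ s ∈ S, s ∈ cands)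
    (hdisj : ∀ s ∈ S, s ∉ cur) (hfree : TripleFree col (↑S ∪ {x | x ∈ cur})) :
    S.card + cur.length ≤ n := by
  induction fuel generalizing cur cands S with
  | zero => have := Finset.card_le_length_of_forall_mem hS; omega
  | succ fuel ih =>
    obtain _ | ⟨c, rest⟩ := cands
    · have := Finset.card_le_length_of_forall_mem hS; simp only [List.length_nil] at this; omega
    rw [capSearch] at hsearch
    split_ifs at hsearch with hshort
    · have := Finset.card_le_length_of_forall_mem hS; omega
    simp only [Bool.and_eq_true, decide_eq_true_eq] at hsearch
    obtain ⟨⟨hlt, htake⟩, hskip⟩ := hsearch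
    simp only [List.length_cons] at hfuel
    by_cases hc : c ∈ S
    · have hcur' : c ∉ cur := hdisj c hc
      have key := ih (cur := c :: cur) (S := S.erase c)
        ((List.length_filter_le _ _).trans (by omega)) htake (by simp; omega) ?_ ?_ ?_
      · rw [Finset.card_erase_of_mem hc] at key
        have := Finset.card_pos.2 ⟨c, hc⟩
        simp only [List.length_cons] at key
        omega
      · intro s hs
        obtain ⟨hsc, hs⟩ := Finset.mem_erase.1 hs
        refine List.mem_filter.2 ⟨?_, List.all_eq_true.2 fun p hp => ?_⟩
        · simpa [hsc] using hS s hs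
        · have hps : p ≠ s := fun h => hdisj s hs (h ▸ hp)
          have hpc : p ≠ c := fun h => hcur' (h ▸ hp)
          simpa using hfree p (by simp [hp]) c (by simp [hc]) s (by simp [hs]) hpc hps (Ne.symm hsc)
      · intro s hs
        obtain ⟨hsc, hs⟩ := Finset.mem_erase.1 hs
        simpa [hsc] using hdisj s hs
      · refine hfree.mono fun x hx => ?_
        simp only [Finset.coe_erase, Set.mem_union, Set.mem_sdiff, Finset.mem_coe,
          Set.mem_singleton_iff, Set.mem_ofPred_eq, List.mem_cons] at hx ⊢
        rcases hx with ⟨hx, -⟩ | rfl | hx <;> tauto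
    · refine ih (by omega) hskip hcur (fun s hs => ?_) hdisj hfree
      have := hS s hs
      rw [List.mem_cons] at this
      exact this.resolve_left fun h => hc (h ▸ hs)

theorem card_le_of_capSearch [DecidableEq α] {T : Finset α} {cur cands : List α}
    (hsearch : capSearch col n cands.length cur cands = true) (hfree : TripleFree col ↑T)
    (hcur : ∀ x ∈ cur, x ∈ T) (hlen : cur.length ≤ n) (hcands : ∀ s ∈ T, s ∉ cur → s ∈ cands) :
    T.card ≤ n := by
  have hout := card_add_length_le_of_capSearch le_rfl hsearch hlen (S := T.filter (· ∉ cur))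
    (fun s hs => hcands s (Finset.mem_filter.1 hs).1 (Finset.mem_filter.1 hs).2)
    (fun s hs => (Finset.mem_filter.1 hs).2)
    (hfree.mono (Set.union_subset (fun x hx => (Finset.mem_filter.1 hx).1) hcur))
  have hin : (T.filter (· ∈ cur)).card ≤ cur.length :=
    Finset.card_le_length_of_forall_mem fun x hx => (Finset.mem_filter.1 hx).2
  rw [← Finset.card_filter_add_card_filter_not (· ∈ cur)]
  omega

end Search

section ZModEight

local notation "Pt" => ZMod 8 × ZMod 8

instance : PreValuationRing (ZMod 8) := ⟨by decide⟩

/-- `0`, `u`, `v` are collinear iff `u` and `v` generate a cyclic subgroup of `(ℤ/8)²`, i.e. iff `8`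
divides the second elementary divisor `det (u, v) / gcd (u, v, 8)`. Adding `64` avoids truncated
subtraction without changing the residue, as `8 * gcd (u, v, 8) ∣ 64`. -/
def detTest (u v : Pt) : Bool :=
  (u.1.val * v.2.val + 64 - u.2.val * v.1.val) %
    (8 * Nat.gcd (Nat.gcd u.1.val u.2.val) (Nat.gcd (Nat.gcd v.1.val v.2.val) 8)) == 0

def collinTest (p q r : Pt) : Bool := detTest (q - p) (r - p)

theorem exists_slope_iff_detTest : ∀ u v : Pt,
    (∃ c : ZMod 8, (u.2 = c * u.1 ∧ v.2 = c * v.1) ∨ (u.1 = c * u.2 ∧ v.1 = c * v.2)) ↔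
      detTest u v = true := by
  decide +kernel

theorem collin_iff_collinTest (p q r : Pt) : Collin 8 p q r ↔ collinTest p q r = true := by
  rw [collin_iff_exists_smul, exists_smul_eq_iff_exists_slope, exists_slope_iff_detTest]
  rfl

theorem isCap_iff_tripleFree (C : Set Pt) : IsCap 8 C ↔ TripleFree collinTest C := by
  simp only [IsCap, TripleFree, collin_iff_collinTest, Bool.not_eq_true]

def points : List Pt := (List.finRange 8).flatMap fun x => (List.finRange 8).map fun y => (x, y)

theorem mem_points : ∀ p : Pt, p ∈ points := by decide

def candidatesOneZero : List Pt := points.filter fun s => !collinTest 0 (1, 0) s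

theorem capSearch_candidatesOneZero :
    capSearch collinTest 8 candidatesOneZero.length [(1, 0), 0] candidatesOneZero = true := by
  decide +kernel

def nonunitPoints : List Pt := points.filter fun u => decide (¬IsUnit u.1 ∧ ¬IsUnit u.2)

theorem capSearch_nonunitPoints :
    capSearch collinTest 8 nonunitPoints.length [] nonunitPoints = true := by
  decide +kernel

theorem card_le_eight_of_zero_mem_of_one_zero_mem {F : Finset Pt} (hF : IsCap 8 ↑F) (h0 : 0 ∈ F)
    (h1 : (1, 0) ∈ F) : F.card ≤ 8 := by
  have hfree := (isCap_iff_tripleFree _).1 hF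
  refine card_le_of_capSearch capSearch_candidatesOneZero hfree ?_ (by decide) ?_
  · simp [h0, h1]
  · intro s hs hscur
    simp only [List.mem_cons, List.not_mem_nil, or_false, not_or] at hscur
    refine List.mem_filter.2 ⟨mem_points s, ?_⟩
    simpa using hfree 0 h0 (1, 0) h1 s hs (by decide) (Ne.symm hscur.2) (Ne.symm hscur.1)

theorem card_le_eight_of_forall_not_isUnit {F : Finset Pt} (hF : IsCap 8 ↑F)
    (hnonunit : ∀ u ∈ F, ¬IsUnit u.1 ∧ ¬IsUnit u.2) : F.card ≤ 8 :=
  card_le_of_capSearch capSearch_nonunitPoints ((isCap_iff_tripleFree _).1 hF) (by simp)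
    (by simp) fun s hs _ => List.mem_filter.2 ⟨mem_points s, by simpa using hnonunit s hs⟩

theorem IsCap.ncard_le_eight {C : Set Pt} (hC : IsCap 8 C) : C.ncard ≤ 8 := by
  classical
  lift C to Finset Pt using C.toFinite
  rw [Set.ncard_coe_finset]
  obtain rfl | ⟨p, hp⟩ := C.eq_empty_or_nonempty
  · simp
  by_cases h : ∃ q ∈ C, IsUnit (q - p).1 ∨ IsUnit (q - p).2
  · obtain ⟨q, hq, hpq⟩ := h
    obtain ⟨f, hfp, hfq⟩ := exists_affineEquiv_apply_eq_zero_and_eq_one_zero hpq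
    rw [← Finset.card_image_of_injective C f.injective]
    refine card_le_eight_of_zero_mem_of_one_zero_mem ?_ ?_ ?_
    · rw [Finset.coe_image]; exact hC.image f
    · exact hfp ▸ Finset.mem_image_of_mem f hp
    · exact hfq ▸ Finset.mem_image_of_mem f hq
  · push Not at h
    set f := (AffineEquiv.vaddConst (ZMod 8) p).symm
    rw [← Finset.card_image_of_injective C f.injective]
    refine card_le_eight_of_forall_not_isUnit ?_ ?_
    · rw [Finset.coe_image]; exact hC.image f
    · intro u hu
      obtain ⟨q, hq, rfl⟩ := Finset.mem_image.1 hu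
      simpa [f] using h q hq

def exampleCap : Finset Pt := {(0, 0), (0, 1), (1, 0), (1, 1), (2, 3), (2, 6), (3, 2), (3, 7)}

theorem isCap_exampleCap : IsCap 8 ↑exampleCap := by
  rw [isCap_iff_tripleFree]
  simp only [TripleFree, Finset.mem_coe]
  decide

end ZModEight

theorem stmt15 :
    IsGreatest {s | ∃ C : Set (ZMod 8 × ZMod 8), IsCap 8 C ∧ C.ncard = s} 8 :=
  ⟨⟨_, isCap_exampleCap, by rw [Set.ncard_coe_finset]; rfl⟩, by
    rintro _ ⟨C, hC, rfl⟩
    exact hC.ncard_le_eight⟩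
end

section
/- For an odd prime p, any cap in Z_p × Z_p has cardinality at most p + 1. -/
def IsLine' (k : ℕ) (L : Set (ZMod k × ZMod k)) : Prop :=
  ∃ a b t1 t2 : ZMod k, (t1, t2) ≠ (0, 0) ∧
    L = {p | ∃ w : ZMod k, p = (a + w * t1, b + w * t2)}

def Collin' (k : ℕ) (p q r : ZMod k × ZMod k) : Prop :=
  ∃ L : Set (ZMod k × ZMod k), IsLine' k L ∧ p ∈ L ∧ q ∈ L ∧ r ∈ L

def IsCap' (k : ℕ) (C : Set (ZMod k × ZMod k)) : Prop :=
  ∀ p ∈ C, ∀ q ∈ C, ∀ r ∈ C, p ≠ q → p ≠ r → q ≠ r → ¬ Collin' k p q r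

/-- Direction (slope) from `P` to `Q`; `none` means vertical. -/
def dirAux (k : ℕ) (P Q : ZMod k × ZMod k) : Option (ZMod k) :=
  if Q.1 = P.1 then none else some ((Q.2 - P.2) * (Q.1 - P.1)⁻¹)

lemma collin_of_dir_eq (p : ℕ) [Fact p.Prime] (P Q R : ZMod p × ZMod p)
    (h : dirAux p P Q = dirAux p P R) : Collin' p P Q R := by
  unfold dirAux at h
  split_ifs at h with hq hr hr
  · -- both vertical
    refine ⟨{x | ∃ w : ZMod p, x = (P.1 + w * 0, 0 + w * 1)}, ⟨P.1, 0, 0, 1, ?_, rfl⟩,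
      ⟨P.2, ?_⟩, ⟨Q.2, ?_⟩, ⟨R.2, ?_⟩⟩
    · simp [Prod.ext_iff]
    · simp [Prod.ext_iff]
    · simp [Prod.ext_iff, hq]
    · simp [Prod.ext_iff, hr]
  · -- both have slope s
    rw [Option.some_inj] at h
    have hq' : Q.1 - P.1 ≠ 0 := sub_ne_zero.mpr hq
    have hr' : R.1 - P.1 ≠ 0 := sub_ne_zero.mpr hr
    set s := (Q.2 - P.2) * (Q.1 - P.1)⁻¹ with hs
    refine ⟨{x | ∃ w : ZMod p, x = (P.1 + w * 1, P.2 + w * s)}, ⟨P.1, P.2, 1, s, ?_, rfl⟩,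
      ⟨0, ?_⟩, ⟨Q.1 - P.1, ?_⟩, ⟨R.1 - P.1, ?_⟩⟩
    · simp [Prod.ext_iff]
    · simp
    · refine Prod.ext_iff.mpr ⟨by simp, ?_⟩
      simp only [hs]
      field_simp
      ring
    · refine Prod.ext_iff.mpr ⟨by simp, ?_⟩
      simp only [h]
      field_simp
      ring

theorem stmt17 (p : ℕ) (hp : p.Prime) (hodd : Odd p)
    (C : Set (ZMod p × ZMod p)) (hC : IsCap' p C) :
    C.ncard ≤ p + 1 := by
  haveI : Fact p.Prime := ⟨hp⟩
  by_contra hlt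
  push_neg at hlt
  have hCfin : C.Finite := Set.toFinite C
  set F := hCfin.toFinset with hFdef
  have hmem : ∀ x, x ∈ F ↔ x ∈ C := fun x => hCfin.mem_toFinset
  have hcardF : p + 1 < F.card := by
    rwa [Set.ncard_eq_toFinset_card C hCfin] at hlt
  -- cap property in terms of F
  have hcap : ∀ P ∈ F, ∀ Q ∈ F, ∀ R ∈ F, P ≠ Q → P ≠ R → Q ≠ R →
      dirAux p P Q ≠ dirAux p P R := by
    intro P hP Q hQ R hR h1 h2 h3 hd
    exact hC P ((hmem P).mp hP) Q ((hmem Q).mp hQ) R ((hmem R).mp hR) h1 h2 h3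
      (collin_of_dir_eq p P Q R hd)
  -- injectivity of dirAux P on F.erase P
  have hinj : ∀ P ∈ F, ∀ Q ∈ F.erase P, ∀ R ∈ F.erase P,
      dirAux p P Q = dirAux p P R → Q = R := by
    intro P hP Q hQ R hR hd
    by_contra hne
    exact hcap P hP Q (Finset.mem_of_mem_erase hQ) R (Finset.mem_of_mem_erase hR)
      (Ne.symm (Finset.ne_of_mem_erase hQ)) (Ne.symm (Finset.ne_of_mem_erase hR)) hne hd
  have hcardOpt : Fintype.card (Option (ZMod p)) = p + 1 := by
    simp [ZMod.card]
  -- card bound : (F.erase P).card ≤ p + 1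
  have hle : ∀ P ∈ F, (F.erase P).card ≤ p + 1 := by
    intro P hP
    have := Finset.card_le_card_of_injOn (dirAux p P)
      (fun x _ => Finset.mem_univ _) (fun a ha b hb => hinj P hP a ha b hb)
    simpa [hcardOpt] using this
  -- hence F.card = p + 2
  have hF2 : F.card = p + 2 := by
    obtain ⟨P, hP⟩ := Finset.card_pos.mp (by omega : 0 < F.card)
    have := hle P hP
    rw [Finset.card_erase_of_mem hP] at this
    omega
  -- surjectivity: every P ∈ F has a partner with the same first coordinate
  have hpartner : ∀ P ∈ F, ∃ Q ∈ F, Q ≠ P ∧ Q.1 = P.1 := by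
    intro P hP
    have hcard' : (Finset.univ : Finset (Option (ZMod p))).card ≤ (F.erase P).card := by
      rw [Finset.card_univ, hcardOpt, Finset.card_erase_of_mem hP, hF2]
      omega
    obtain ⟨Q, hQ, hQd⟩ := Finset.surj_on_of_inj_on_of_card_le (fun a _ => dirAux p P a)
      (fun a _ => Finset.mem_univ _) (fun a b ha hb => hinj P hP a ha b hb)
      hcard' none (Finset.mem_univ _)
    refine ⟨Q, Finset.mem_of_mem_erase hQ, Finset.ne_of_mem_erase hQ, ?_⟩
    by_contra hx
    simp [dirAux, hx] at hQd
  -- fibers over first coordinate have even cardinality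
  have hfiber : ∀ a : ZMod p, Even ((F.filter (fun x => x.1 = a)).card) := by
    intro a
    rcases Finset.eq_empty_or_nonempty (F.filter (fun x => x.1 = a)) with he | ⟨P, hP⟩
    · simp [he]
    · rw [Finset.mem_filter] at hP
      obtain ⟨hPF, hPa⟩ := hP
      obtain ⟨Q, hQF, hQne, hQx⟩ := hpartner P hPF
      have h2le : 2 ≤ (F.filter (fun x => x.1 = a)).card := by
        apply Finset.one_lt_card.mpr
        exact ⟨P, Finset.mem_filter.mpr ⟨hPF, hPa⟩, Q,
          Finset.mem_filter.mpr ⟨hQF, by rw [hQx, hPa]⟩, Ne.symm hQne⟩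
      have hle2 : (F.filter (fun x => x.1 = a)).card ≤ 2 := by
        by_contra h3
        push_neg at h3
        obtain ⟨x, hx, y, hy, z, hz, hxy, hxz, hyz⟩ := Finset.two_lt_card.mp h3
        rw [Finset.mem_filter] at hx hy hz
        refine hcap x hx.1 y hy.1 z hz.1 hxy hxz hyz ?_
        simp [dirAux, hx.2, hy.2, hz.2]
      have : (F.filter (fun x => x.1 = a)).card = 2 := le_antisymm hle2 h2le
      rw [this]
      exact even_two
  -- sum over fibers: F.card is even
  have hsum : F.card = ∑ a ∈ Finset.univ, (F.filter (fun x => x.1 = a)).card :=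
    Finset.card_eq_sum_card_fiberwise (fun x _ => Finset.mem_univ x.1)
  have heven : Even F.card := by
    rw [hsum]
    exact Finset.even_sum _ (fun a _ => hfiber a)
  obtain ⟨r, hr⟩ := heven
  obtain ⟨k, hk⟩ := hodd
  omega
end
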